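/- arXiv:2104.07596 — 2 statements merged into one kernel-verified Lean document; each statement's English description precedes it below -/
import Mathlib

section
/- Fix h ≥ 0 and let m_h(n) denote the number of Motzkin paths of length n with height at most h. Then in the formal power series ring ℚ[[z]]: (∑_{n≥0} m_h(n)·z^n) · D_{h+1}(z) = D_h(z), where the polynomials D_h, D_{h+1} are regarded as power series. -/
open Finset
open scoped Classical

/-- A step: `+1`, `-1` or `0`. -/
abbrev Step : Type := ({1, -1, 0} : Finset ℤ)

/-- Partial sum of the first `k` steps. -/
def psum {n : ℕ} (w : Fin n → Step) (k : ℕ) : ℤ :=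
  ∑ i : Fin n, if (i : ℕ) < k then (w i : ℤ) else 0

/-- `w` is a Motzkin path: all partial sums are nonnegative and the total sum is `0`. -/
def IsMotzkin {n : ℕ} (w : Fin n → Step) : Prop :=
  (∀ k ∈ Finset.range (n + 1), 0 ≤ psum w k) ∧ psum w n = 0

/-- The height of a path: the maximum of its partial sums (`0` for the empty path). -/
def height {n : ℕ} (w : Fin n → Step) : ℤ :=
  (Finset.range (n + 1)).sup' (Finset.nonempty_range_iff.mpr (Nat.succ_ne_zero n)) (psum w)

/-- `w` has a horizontal step at level `j`: some step is `0` and the partial sum up to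
and including that step equals `j`. -/
def HasHorizAt {n : ℕ} (w : Fin n → Step) (j : ℤ) : Prop :=
  ∃ i : Fin n, (w i : ℤ) = 0 ∧ psum w ((i : ℕ) + 1) = j

open Polynomial in
/-- `D 0 = 1`, `D 1 = 1 - z`, `D n = (1-z) D (n-1) - z^2 D (n-2)`. -/
noncomputable def D : ℕ → Polynomial ℚ
  | 0 => 1
  | 1 => 1 - X
  | (n + 2) => (1 - X) * D (n + 1) - X ^ 2 * D n

/-- `m h n` is the number of Motzkin paths of length `n` with height at most `h`. -/
noncomputable def m (h n : ℕ) : ℕ :=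
  (Finset.univ.filter fun w : Fin n → Step => IsMotzkin w ∧ height w ≤ (h : ℤ)).card

/-!
Let `F a` count, by length, the walks from level `a` down to `0` that stay in `[0, h]`.
Splitting off the first step gives the linear system
`F a = [a = 0] + z (F (a + 1) + F (a - 1) + F a)` for `0 ≤ a ≤ h`, and `F a = 0` otherwise.
By the recurrence of `D` (extended by `D (-1) = 0`), `G a = z ^ a D (h - a)` solves the same system
with `[a = 0]` replaced by `[a = 0] D (h + 1)`. Hence every `E a = F a D (h + 1) - G a` is `z` times
a finite sum of `E`'s, which forces all coefficients of all `E a` to vanish, and `E 0 = 0` is the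
claim.
-/

open PowerSeries

theorem PowerSeries.eq_zero_of_forall_eq_X_mul_sum {ι R : Type*} [Semiring R] (E : ι → R⟦X⟧)
    (hE : ∀ a, ∃ s : Finset ι, E a = X * ∑ b ∈ s, E b) : E = 0 := by
  suffices ∀ n a, coeff n (E a) = 0 from funext fun a => PowerSeries.ext fun n => this n a
  intro n
  induction n with
  | zero =>
    intro a
    obtain ⟨s, hs⟩ := hE a
    rw [hs, coeff_zero_X_mul]
  | succ n ih =>
    intro a
    obtain ⟨s, hs⟩ := hE a
    rw [hs, coeff_succ_X_mul, map_sum]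
    exact Finset.sum_eq_zero fun b _ => ih b

theorem sum_step {M : Type*} [AddCommMonoid M] (f : ℤ → M) :
    ∑ s : Step, f s = f 1 + f (-1) + f 0 := by
  rw [Finset.sum_coe_sort _ f, Finset.sum_insert (by decide), Finset.sum_insert (by decide),
    Finset.sum_singleton, add_assoc]

theorem psum_zero {n : ℕ} (w : Fin n → Step) : psum w 0 = 0 := by
  simp [psum]

theorem psum_cons_succ {n : ℕ} (s : Step) (v : Fin n → Step) (k : ℕ) :
    psum (Fin.cons s v : Fin (n + 1) → Step) (k + 1) = s + psum v k := by
  simp [psum, Fin.sum_univ_succ]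

def IsBoundedWalk (h : ℕ) (a : ℤ) {n : ℕ} (w : Fin n → Step) : Prop :=
  (∀ k ≤ n, a + psum w k ∈ Icc 0 (h : ℤ)) ∧ a + psum w n = 0

theorem isMotzkin_and_height_le_iff (h : ℕ) {n : ℕ} (w : Fin n → Step) :
    IsMotzkin w ∧ height w ≤ h ↔ IsBoundedWalk h 0 w := by
  simp only [IsMotzkin, height, IsBoundedWalk, Finset.sup'_le_iff, Finset.mem_range,
    Nat.lt_succ_iff, Finset.mem_Icc, zero_add]
  constructor
  · rintro ⟨⟨hnonneg, hend⟩, hle⟩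
    exact ⟨fun k hk => ⟨hnonneg k hk, hle k hk⟩, hend⟩
  · rintro ⟨hbound, hend⟩
    exact ⟨⟨fun k hk => (hbound k hk).1, hend⟩, fun k hk => (hbound k hk).2⟩

theorem isBoundedWalk_zero_iff (h : ℕ) (a : ℤ) (w : Fin 0 → Step) :
    IsBoundedWalk h a w ↔ a = 0 := by
  simp only [IsBoundedWalk, Nat.le_zero, forall_eq, psum_zero, add_zero, Finset.mem_Icc]
  constructor
  · exact fun hw => hw.2
  · rintro rfl
    exact ⟨⟨le_rfl, Nat.cast_nonneg h⟩, rfl⟩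

theorem isBoundedWalk_cons_iff (h : ℕ) (a : ℤ) {n : ℕ} (s : Step) (v : Fin n → Step) :
    IsBoundedWalk h a (Fin.cons s v : Fin (n + 1) → Step) ↔
      a ∈ Icc 0 (h : ℤ) ∧ IsBoundedWalk h (a + s) v := by
  simp only [IsBoundedWalk, psum_cons_succ, ← add_assoc]
  constructor
  · rintro ⟨hbound, hend⟩
    refine ⟨by simpa [psum_zero] using hbound 0 (Nat.zero_le _), fun k hk => ?_, hend⟩
    simpa [psum_cons_succ, add_assoc] using hbound (k + 1) (by omega)
  · rintro ⟨ha, hbound, hend⟩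
    refine ⟨fun k hk => ?_, hend⟩
    cases k with
    | zero => simpa [psum_zero] using ha
    | succ k => simpa [psum_cons_succ, add_assoc] using hbound k (by omega)

noncomputable def walkCount (h n : ℕ) (a : ℤ) : ℕ :=
  (univ.filter fun w : Fin n → Step => IsBoundedWalk h a w).card

theorem m_eq_walkCount (h n : ℕ) : m h n = walkCount h n 0 := by
  simp only [m, walkCount, isMotzkin_and_height_le_iff]

theorem walkCount_zero (h : ℕ) (a : ℤ) : walkCount h 0 a = if a = 0 then 1 else 0 := by
  by_cases ha : a = 0 <;> simp [walkCount, isBoundedWalk_zero_iff, ha]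

theorem walkCount_succ (h n : ℕ) (a : ℤ) :
    walkCount h (n + 1) a =
      if a ∈ Icc 0 (h : ℤ) then ∑ s : Step, walkCount h n (a + s) else 0 := by
  let e := (Fin.consEquiv fun _ : Fin (n + 1) => Step).subtypeEquiv
    fun p => (isBoundedWalk_cons_iff h a p.1 p.2).symm
  rw [walkCount, ← Fintype.card_subtype, ← Fintype.card_congr e]
  split_ifs with ha
  · simp only [ha, true_and]
    rw [Fintype.card_congr (Equiv.subtypeProdEquivSigmaSubtype fun (s : Step) v =>
      IsBoundedWalk h (a + s) v), Fintype.card_sigma]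
    simp only [walkCount, Fintype.card_subtype]
  · simp [ha]

theorem walkCount_succ_of_mem (h n : ℕ) {a : ℤ} (ha : a ∈ Icc 0 (h : ℤ)) :
    walkCount h (n + 1) a = walkCount h n (a + 1) + walkCount h n (a - 1) + walkCount h n a := by
  rw [walkCount_succ, if_pos ha, sum_step fun s => walkCount h n (a + s), add_zero,
    ← sub_eq_add_neg]

theorem walkCount_succ_of_not_mem (h n : ℕ) {a : ℤ} (ha : a ∉ Icc 0 (h : ℤ)) :
    walkCount h (n + 1) a = 0 := by
  rw [walkCount_succ, if_neg ha]

noncomputable def walkGF (h : ℕ) (a : ℤ) : PowerSeries ℚ :=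
  mk fun n => (walkCount h n a : ℚ)

theorem walkGF_of_not_mem (h : ℕ) {a : ℤ} (ha : a ∉ Icc 0 (h : ℤ)) : walkGF h a = 0 := by
  have ha0 : a ≠ 0 := by rintro rfl; simp at ha
  ext (_ | n) <;> simp [walkGF, walkCount_zero, walkCount_succ_of_not_mem h _ ha, ha0]

theorem walkGF_of_mem (h : ℕ) {a : ℤ} (ha : a ∈ Icc 0 (h : ℤ)) :
    walkGF h a =
      (if a = 0 then 1 else 0) + X * (walkGF h (a + 1) + walkGF h (a - 1) + walkGF h a) := by
  ext (_ | n)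
  · by_cases ha0 : a = 0 <;> simp [walkGF, walkCount_zero, ha0]
  · simp only [walkGF, map_add, coeff_mk, coeff_succ_X_mul, walkCount_succ_of_mem h n ha]
    split_ifs <;> simp

/-- `Dpred k = D (k - 1)` with `D (-1) = 0`, so that the recurrence of `D` holds from `k = 0` on. -/
noncomputable def Dpred : ℕ → PowerSeries ℚ
  | 0 => 0
  | k + 1 => D k

theorem Dpred_add_two (k : ℕ) :
    Dpred (k + 2) = (1 - X) * Dpred (k + 1) - X ^ 2 * Dpred k := by
  cases k <;> simp [Dpred, D]

/-- For `i > h` the truncated subtraction gives `Dpred 0 = 0`, as it should. -/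
noncomputable def walkGFNum (h : ℕ) : ℤ → PowerSeries ℚ
  | (i : ℕ) => X ^ i * Dpred (h + 1 - i)
  | Int.negSucc _ => 0

theorem walkGFNum_natCast (h i : ℕ) : walkGFNum h i = X ^ i * Dpred (h + 1 - i) := rfl

theorem walkGFNum_of_not_mem (h : ℕ) {a : ℤ} (ha : a ∉ Icc 0 (h : ℤ)) :
    walkGFNum h a = 0 := by
  rcases a with i | i
  · have hi : h + 1 - i = 0 := by simp at ha; omega
    simp [walkGFNum, hi, Dpred]
  · rfl

theorem walkGFNum_of_mem (h : ℕ) {a : ℤ} (ha : a ∈ Icc 0 (h : ℤ)) :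
    walkGFNum h a = (if a = 0 then (D (h + 1) : PowerSeries ℚ) else 0) +
      X * (walkGFNum h (a + 1) + walkGFNum h (a - 1) + walkGFNum h a) := by
  obtain ⟨i, rfl⟩ := Int.eq_ofNat_of_zero_le (mem_Icc.1 ha).1
  obtain ⟨j, rfl⟩ : ∃ j, h = i + j := ⟨h - i, by simp at ha; omega⟩
  have hup : walkGFNum (i + j) (i + 1) = X ^ (i + 1) * Dpred j := by
    rw [← Nat.cast_succ, walkGFNum_natCast, show i + j + 1 - (i + 1) = j by omega]
  have hat : walkGFNum (i + j) i = X ^ i * Dpred (j + 1) := by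
    rw [walkGFNum_natCast, show i + j + 1 - i = j + 1 by omega]
  rw [hup, hat]
  cases i with
  | zero =>
    simp only [Nat.cast_zero, zero_add, if_true]
    rw [show walkGFNum j (0 - 1) = 0 from rfl,
      show (D (j + 1) : PowerSeries ℚ) = Dpred (j + 2) from rfl]
    linear_combination -(Dpred_add_two j)
  | succ i =>
    have hdown : walkGFNum (i + 1 + j) ((i + 1 : ℕ) - 1) = X ^ i * Dpred (j + 2) := by
      rw [Nat.cast_succ, add_sub_cancel_right, walkGFNum_natCast,
        show i + 1 + j + 1 - i = j + 2 by omega]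
    rw [hdown, if_neg (by omega)]
    linear_combination (-X ^ (i + 1)) * (Dpred_add_two j)

theorem walkGF_mul_D_eq_walkGFNum (h : ℕ) (a : ℤ) :
    walkGF h a * (D (h + 1) : PowerSeries ℚ) = walkGFNum h a := by
  refine sub_eq_zero.1 (congrFun (PowerSeries.eq_zero_of_forall_eq_X_mul_sum
    (fun b => walkGF h b * (D (h + 1) : PowerSeries ℚ) - walkGFNum h b) fun b => ?_) a)
  by_cases hb : b ∈ Icc 0 (h : ℤ)
  · refine ⟨{b + 1, b - 1, b}, ?_⟩
    rw [sum_insert (by simp; omega), sum_insert (by simp), sum_singleton]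
    conv_lhs => rw [walkGF_of_mem h hb, walkGFNum_of_mem h hb]
    split_ifs <;> ring
  · exact ⟨∅, by simp [walkGF_of_not_mem h hb, walkGFNum_of_not_mem h hb]⟩

/-- The generating function of Motzkin paths of height at most `h` equals `D h / D (h+1)`. -/
theorem motzkin_height_le_genfun (h : ℕ) :
    (PowerSeries.mk fun n => (m h n : ℚ)) * (D (h + 1) : PowerSeries ℚ)
      = (D h : PowerSeries ℚ) := by
  have hm : (PowerSeries.mk fun n => (m h n : ℚ)) = walkGF h 0 := by
    simp only [walkGF, m_eq_walkCount]
  rw [hm, walkGF_mul_D_eq_walkGFNum]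
  exact walkGFNum_natCast h 0 |>.trans (one_mul _)
end

section
/- Fix h ≥ 0 and let b_h(n) denote the number of Motzkin paths of length n with height at most h that have no horizontal step at level h. Then in the formal power series ring ℚ[[z]]: (∑_{n≥0} b_h(n)·z^n) · D*_{h+1}(z) = D*_h(z), where the polynomials D*_h, D*_{h+1} are regarded as power series. -/
/-!
Let `F_j` count, by length, the paths that start at level `0`, stay in the strip `[0, h]`, take no
horizontal step at level `h` and end at level `j`. Removing the last step gives the transfer equations
`F_j = [j = 0] + z (F_{j-1} + F_{j+1} + [j ≠ h] F_j)` for `0 ≤ j ≤ h`. Thanks to the recurrence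
`D*_{k+2} = (1 - z) D*_{k+1} - z² D*_k`, the series `z^j D*_{h-j}` satisfy the same system with
`[j = 0]` replaced by `[j = 0] D*_{h+1}`. Each equation writes an unknown as `z` times a combination
of unknowns, so the system has at most one solution in `ℚ[[z]]`. Hence `F_j D*_{h+1} = z^j D*_{h-j}`,
and `j = 0` is the theorem.
-/

open Finset
open scoped Classical

open Polynomial in
/-- `D* 0 = 1`, `D* 1 = 1`, `D* n = D (n-1) - z^2 D (n-2)`. -/
noncomputable def Dstar : ℕ → Polynomial ℚ
  | 0 => 1
  | 1 => 1
  | (n + 2) => D (n + 1) - X ^ 2 * D n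

/-- `b h n` is the number of Motzkin paths of length `n` with height at most `h`
having no horizontal step at level `h`. -/
noncomputable def b (h n : ℕ) : ℕ :=
  (Finset.univ.filter fun w : Fin n → Step =>
    IsMotzkin w ∧ height w ≤ (h : ℤ) ∧ ¬ HasHorizAt w (h : ℤ)).card

section Paths

variable {n : ℕ} (v : Fin n → Step) (s : Step)

lemma psum_snoc (k : ℕ) :
    psum (Fin.snoc v s : Fin (n + 1) → Step) k = psum v k + if n < k then (s : ℤ) else 0 := by
  simp [psum, Fin.sum_univ_castSucc]

lemma psum_of_le {k : ℕ} (hk : n ≤ k) : psum v k = psum v n :=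
  Finset.sum_congr rfl fun i _ => by simp [i.is_lt, i.is_lt.trans_le hk]

lemma psum_snoc_of_le {k : ℕ} (hk : k ≤ n) :
    psum (Fin.snoc v s : Fin (n + 1) → Step) k = psum v k := by
  simp [psum_snoc, not_lt.2 hk]

lemma psum_snoc_succ : psum (Fin.snoc v s : Fin (n + 1) → Step) (n + 1) = psum v n + s := by
  simp [psum_snoc, psum_of_le v n.le_succ]

lemma hasHorizAt_snoc_iff (j : ℤ) :
    HasHorizAt (Fin.snoc v s : Fin (n + 1) → Step) j ↔
      HasHorizAt v j ∨ ((s : ℤ) = 0 ∧ psum v n + s = j) := by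
  simp only [HasHorizAt, Fin.exists_fin_succ', Fin.snoc_castSucc, Fin.snoc_last,
    Fin.val_castSucc, Fin.val_last, psum_snoc_succ]
  refine or_congr (exists_congr fun i => ?_) Iff.rfl
  rw [psum_snoc_of_le v s i.is_lt]

end Paths

lemma card_filter_snoc {α : Type*} [Fintype α] {n : ℕ} (P : (Fin (n + 1) → α) → Prop)
    [DecidablePred P] :
    #{w | P w} = ∑ a : α, #{v : Fin n → α | P (Fin.snoc v a)} := by
  simp only [card_filter]
  rw [← (Fin.snocEquiv fun _ => α).sum_comp, Fintype.sum_prod_type]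
  rfl

def IsStripPath (h : ℕ) {n : ℕ} (w : Fin n → Step) (j : ℤ) : Prop :=
  (∀ k ≤ n, 0 ≤ psum w k ∧ psum w k ≤ h) ∧ ¬HasHorizAt w h ∧ psum w n = j

lemma isStripPath_snoc_iff (h : ℕ) {n : ℕ} (v : Fin n → Step) (s : Step) (j : ℤ) :
    IsStripPath h (Fin.snoc v s : Fin (n + 1) → Step) j ↔
      IsStripPath h v (j - s) ∧ (0 ≤ j ∧ j ≤ h) ∧ ¬((s : ℤ) = 0 ∧ j = h) := by
  have bounds : (∀ k ≤ n + 1, 0 ≤ psum (Fin.snoc v s : Fin (n + 1) → Step) k ∧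
      psum (Fin.snoc v s : Fin (n + 1) → Step) k ≤ h) ↔
      (∀ k ≤ n, 0 ≤ psum v k ∧ psum v k ≤ h) ∧ (0 ≤ psum v n + s ∧ psum v n + s ≤ h) := by
    simp +contextual only [Nat.le_succ_iff, or_imp, forall_and, forall_eq, psum_snoc_succ,
      psum_snoc_of_le]
    tauto
  rw [IsStripPath, IsStripPath, bounds, hasHorizAt_snoc_iff, psum_snoc_succ]
  constructor
  · rintro ⟨⟨hv, hj⟩, hhor, rfl⟩
    exact ⟨⟨hv, fun hv' => hhor (.inl hv'), by ring⟩, hj, fun hs => hhor (.inr hs)⟩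
  · rintro ⟨⟨hv, hhor, hvj⟩, hj, hs⟩
    obtain rfl : psum v n + s = j := by rw [hvj, sub_add_cancel]
    exact ⟨⟨hv, hj⟩, not_or.2 ⟨hhor, hs⟩, rfl⟩

noncomputable def stripCount (h n : ℕ) (j : ℤ) : ℕ :=
  #{w : Fin n → Step | IsStripPath h w j}

lemma stripCount_zero (h : ℕ) (j : ℤ) : stripCount h 0 j = if j = 0 then 1 else 0 := by
  have nil_iff : ∀ w : Fin 0 → Step, IsStripPath h w j ↔ j = 0 := by
    simp [IsStripPath, psum, HasHorizAt, eq_comm]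
  simp [stripCount, nil_iff, apply_ite]

lemma stripCount_eq_zero {h : ℕ} {j : ℤ} (hj : ¬(0 ≤ j ∧ j ≤ h)) (n : ℕ) :
    stripCount h n j = 0 := by
  rw [stripCount, card_eq_zero, filter_eq_empty_iff]
  rintro w - ⟨hw, -, rfl⟩
  exact hj (hw n le_rfl)

lemma stripCount_succ {h : ℕ} {j : ℤ} (hj : 0 ≤ j ∧ j ≤ h) (n : ℕ) :
    stripCount h (n + 1) j =
      stripCount h n (j - 1) + stripCount h n (j + 1) + if j = h then 0 else stripCount h n j := by
  rw [stripCount, card_filter_snoc]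
  simp only [isStripPath_snoc_iff, hj, true_and]
  rw [Finset.sum_coe_sort ({1, -1, 0} : Finset ℤ)
    (fun s => #{v : Fin n → Step | IsStripPath h v (j - s) ∧ ¬(s = 0 ∧ j = h)})]
  split_ifs with hjh <;> simp [stripCount, hjh, sub_eq_add_neg, add_assoc]

lemma b_eq_stripCount (h n : ℕ) : b h n = stripCount h n 0 := by
  refine congrArg card (filter_congr fun w _ => ?_)
  simp only [IsMotzkin, height, IsStripPath, Finset.sup'_le_iff, Finset.mem_range, Nat.lt_succ_iff,
    forall_and]
  tauto

open PowerSeries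

lemma PowerSeries.eq_zero_of_forall_eq_X_mul_mem_span {ι R : Type*} [Semiring R]
    (G : ι → R⟦X⟧) (hG : ∀ i, ∃ g ∈ Submodule.span R (Set.range G), G i = X * g) (i : ι) :
    G i = 0 := by
  suffices vanish : ∀ n, Submodule.span R (Set.range G) ≤ LinearMap.ker (coeff n) by
    ext n
    exact vanish n (Submodule.subset_span ⟨i, rfl⟩)
  intro n
  induction n with
  | zero =>
    refine Submodule.span_le.2 ?_
    rintro _ ⟨j, rfl⟩
    obtain ⟨g, -, hj⟩ := hG j
    simp [hj]
  | succ n ih =>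
    refine Submodule.span_le.2 ?_
    rintro _ ⟨j, rfl⟩
    obtain ⟨g, hg, hj⟩ := hG j
    simpa [hj, coeff_succ_X_mul] using ih hg

noncomputable def stripGF (h : ℕ) (j : ℤ) : ℚ⟦X⟧ :=
  mk fun n => (stripCount h n j : ℚ)

lemma stripGF_eq_zero {h : ℕ} {j : ℤ} (hj : ¬(0 ≤ j ∧ j ≤ h)) : stripGF h j = 0 := by
  ext n
  simp [stripGF, stripCount_eq_zero hj]

lemma stripGF_eq {h : ℕ} {j : ℤ} (hj : 0 ≤ j ∧ j ≤ h) :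
    stripGF h j = (if j = 0 then 1 else 0) +
      X * (stripGF h (j - 1) + stripGF h (j + 1) + if j = h then 0 else stripGF h j) := by
  ext (_ | n)
  · simp [stripGF, stripCount_zero]
  · rw [stripGF, coeff_mk, stripCount_succ hj]
    split_ifs <;> simp [stripGF, coeff_one, coeff_succ_X_mul]

lemma Dstar_add_two (m : ℕ) :
    Dstar (m + 2) = (1 - Polynomial.X) * Dstar (m + 1) - Polynomial.X ^ 2 * Dstar m := by
  rcases m with _ | _ | k <;> simp only [Dstar, D] <;> ring

lemma coe_Dstar_add_two (m : ℕ) :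
    (Dstar (m + 2) : ℚ⟦X⟧) = (1 - X) * (Dstar (m + 1) : ℚ⟦X⟧) - X ^ 2 * (Dstar m : ℚ⟦X⟧) := by
  rw [Dstar_add_two]
  push_cast
  ring

noncomputable def stripNum (h : ℕ) (j : ℤ) : ℚ⟦X⟧ :=
  if 0 ≤ j ∧ j ≤ h then X ^ j.toNat * (Dstar (h - j.toNat) : ℚ⟦X⟧) else 0

lemma stripNum_eq_zero {h : ℕ} {j : ℤ} (hj : ¬(0 ≤ j ∧ j ≤ h)) : stripNum h j = 0 :=
  if_neg hj

lemma stripNum_eq {h : ℕ} {j : ℤ} (hj : 0 ≤ j ∧ j ≤ h) :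
    stripNum h j = (if j = 0 then (Dstar (h + 1) : ℚ⟦X⟧) else 0) +
      X * (stripNum h (j - 1) + stripNum h (j + 1) + if j = h then 0 else stripNum h j) := by
  obtain ⟨m, rfl⟩ := Int.eq_ofNat_of_zero_le hj.1
  obtain ⟨e, rfl⟩ := Nat.exists_eq_add_of_le (show m ≤ h by exact_mod_cast hj.2)
  have toNat_pred (k : ℕ) : (((k + 1 : ℕ) : ℤ) - 1).toNat = k := by omega
  have Dstar_zero : Dstar 0 = Dstar 1 := rfl
  rcases m with _ | l <;> rcases e with _ | e <;> simp only [stripNum] <;> split_ifs <;> try omega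
  all_goals simp only [toNat_pred, Int.toNat_natCast_add_one, Int.toNat_natCast, zero_add, add_zero,
    Nat.sub_zero, Nat.sub_self, Nat.add_sub_cancel, Nat.add_sub_cancel_left, Dstar_zero]
  · ring
  · linear_combination -coe_Dstar_add_two e
  · ring
  · rw [show l + 1 + (e + 1) - l = e + 2 by omega, show l + 1 + (e + 1) - (l + 1 + 1) = e by omega]
    linear_combination -X ^ (l + 1) * coe_Dstar_add_two e

lemma stripGF_mul_Dstar (h : ℕ) (j : ℤ) : stripGF h j * (Dstar (h + 1) : ℚ⟦X⟧) = stripNum h j := by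
  set G := fun i => stripGF h i * (Dstar (h + 1) : ℚ⟦X⟧) - stripNum h i
  refine sub_eq_zero.1 (eq_zero_of_forall_eq_X_mul_mem_span G (fun i => ?_) j)
  by_cases hi : 0 ≤ i ∧ i ≤ h
  · have mem (k : ℤ) : G k ∈ Submodule.span ℚ (Set.range G) := Submodule.subset_span ⟨k, rfl⟩
    refine ⟨G (i - 1) + G (i + 1) + if i = h then 0 else G i, ?_, ?_⟩
    · refine add_mem (add_mem (mem _) (mem _)) ?_
      split_ifs
      exacts [zero_mem _, mem i]
    · simp only [G]
      conv_lhs => rw [stripGF_eq hi, stripNum_eq hi]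
      split_ifs <;> ring
  · exact ⟨0, zero_mem _, by simp [G, stripGF_eq_zero hi, stripNum_eq_zero hi]⟩

/-- The generating function of Motzkin paths of height at most `h` with no horizontal
step at level `h` equals `D* h / D* (h+1)`. -/
theorem motzkin_no_horiz_genfun (h : ℕ) :
    (PowerSeries.mk fun n => (b h n : ℚ)) * (Dstar (h + 1) : PowerSeries ℚ)
      = (Dstar h : PowerSeries ℚ) := by
  have gf_eq : (PowerSeries.mk fun n => (b h n : ℚ)) = stripGF h 0 := by
    simp [stripGF, b_eq_stripCount]
  simpa [gf_eq, stripNum] using stripGF_mul_Dstar h 0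
end
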